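/- arXiv:2309.05237 — 2 statements merged into one kernel-verified Lean document; each statement's English description precedes it below -/
import Mathlib

section
/- Let A be a primitive PC(η)-axial algebra with Frobenius form (·,·) normalized by (a,a) = 1 on primitive axes. Let a be a primitive axis and x, y ∈ A, and set α = (a,x), β = (x,y), γ = (a,y), ψ = (a, xy). Then a(xy) + x(ay) + y(ax) = ((1+η)(ψ - αγ) - ηβ)·a - γη·x - αη·y + (1+η)·(xy + γ·ax + α·ay). -/
/-!
Decompose `x = α a + u + p` and `y = γ a + v + q` along the eigenspaces of `a` with
eigenvalues `1, η, 1/2`; the Frobenius property makes distinct eigenspaces orthogonal, which is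
how `α = (a,x)` and `γ = (a,y)` arise. By primitivity and the fusion law, `uv` is a multiple of
`a` and `pq` is a multiple of `a` plus an `η`-eigenvector `w`, the coefficients again being
read off with the form. Hence `a(xy) + x(ay) + y(ax)` is determined by the eigenvalues together
with the scalars `(u,v)` and `(p,q)`, and these two are eliminated through
`ψ = αγ + η(u,v) + (p,q)/2` and `β = αγ + (u,v) + (p,q)`.
-/

open Submodule

variable {F : Type*} [Field F] {A : Type*} [NonUnitalNonAssocCommRing A]
  [Module F A] [SMulCommClass F A A] [IsScalarTower F A A]

variable (F) in
/-- The `lam`-eigenspace of the adjoint map of `a`. -/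
def PCeig (a : A) (lam : F) : Submodule F A where
  carrier := {x : A | a * x = lam • x}
  add_mem' := by
    intro x y hx hy
    simp only [Set.mem_setOf_eq] at hx hy ⊢
    rw [mul_add, hx, hy, smul_add]
  zero_mem' := by simp
  smul_mem' := by
    intro c x hx
    simp only [Set.mem_setOf_eq] at hx ⊢
    rw [mul_smul_comm, hx, smul_smul, smul_smul, mul_comm]

variable (F) in
/-- The fusion law `PC(η)` for an idempotent (axis) `a`. -/
structure IsPCAxis (η : F) (a : A) : Prop where
  idem : a * a = a
  decomp : PCeig F a 1 ⊔ PCeig F a η ⊔ PCeig F a (1/2 : F) = ⊤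
  fus11 : ∀ x ∈ PCeig F a 1, ∀ y ∈ PCeig F a 1, x * y ∈ PCeig F a 1
  fus1e : ∀ x ∈ PCeig F a 1, ∀ y ∈ PCeig F a η, x * y ∈ PCeig F a η
  fus1h : ∀ x ∈ PCeig F a 1, ∀ y ∈ PCeig F a (1/2 : F), x * y ∈ PCeig F a (1/2 : F)
  fusee : ∀ x ∈ PCeig F a η, ∀ y ∈ PCeig F a η, x * y ∈ PCeig F a 1
  fuseh : ∀ x ∈ PCeig F a η, ∀ y ∈ PCeig F a (1/2 : F), x * y ∈ PCeig F a (1/2 : F)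
  fushh : ∀ x ∈ PCeig F a (1/2 : F), ∀ y ∈ PCeig F a (1/2 : F),
    x * y ∈ PCeig F a 1 ⊔ PCeig F a η

variable (F) in
/-- A primitive axis: an axis with `A_1(a) = F·a` (one-dimensional). -/
def IsPrimPCAxis (η : F) (a : A) : Prop :=
  IsPCAxis F η a ∧ a ≠ 0 ∧ PCeig F a 1 = Submodule.span F {a}

variable (F A) in
/-- A `PC(η)`-axial algebra: generated, as a non-unital algebra, by a (nonempty) set of axes. -/
def IsPCAxialAlgebra (η : F) : Prop :=
  ∃ X : Set A, X.Nonempty ∧ (∀ a ∈ X, IsPCAxis F η a) ∧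
    NonUnitalAlgebra.adjoin F X = ⊤

variable (F A) in
/-- A primitive `PC(η)`-axial algebra: generated by a (nonempty) set of primitive axes. -/
def IsPrimPCAxialAlgebra (η : F) : Prop :=
  ∃ X : Set A, X.Nonempty ∧ (∀ a ∈ X, IsPrimPCAxis F η a) ∧
    NonUnitalAlgebra.adjoin F X = ⊤

theorem one_ne_one_div_two : (1 : F) ≠ 1 / 2 := by
  intro h
  rcases eq_or_ne (2 : F) 0 with h2 | h2
  · simp [h2] at h
  · field_simp at h
    exact one_ne_zero (by linear_combination h)

section Frobenius

omit [SMulCommClass F A A] [IsScalarTower F A A]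

variable {B : A →ₗ[F] A →ₗ[F] F}

theorem frobenius_apply_mul_of_eigen (hBfrob : ∀ x y z : A, B (x * y) z = B x (y * z))
    {a x : A} {l : F} (hx : a * x = l • x) (y : A) : B a (x * y) = l * B x y := by
  rw [← hBfrob, hx, map_smul, LinearMap.smul_apply, smul_eq_mul]

theorem frobenius_apply_eq_zero_of_eigen (hBfrob : ∀ x y z : A, B (x * y) z = B x (y * z))
    {a x y : A} {l m : F} (hlm : l ≠ m) (hx : a * x = l • x) (hy : a * y = m • y) :
    B x y = 0 := by
  have hl : B (a * x) y = l * B x y := by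
    rw [hx, map_smul, LinearMap.smul_apply, smul_eq_mul]
  have hm : B (a * x) y = m * B x y := by rw [mul_comm, hBfrob, hy, map_smul, smul_eq_mul]
  have : (l - m) * B x y = 0 := by rw [sub_mul, ← hl, ← hm, sub_self]
  exact (mul_eq_zero.mp this).resolve_left (sub_ne_zero.mpr hlm)

end Frobenius

section PrimitiveAxis

omit [IsScalarTower F A A]

variable {η : F} {a : A} {B : A →ₗ[F] A →ₗ[F] F}

theorem IsPCAxis.self_mem_PCeig_one (ha : IsPCAxis F η a) : a ∈ PCeig F a 1 := by
  change a * a = (1 : F) • a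
  rw [one_smul, ha.idem]

theorem IsPrimPCAxis.eq_smul_of_mem_one (ha : IsPrimPCAxis F η a) (hBaa : B a a = 1) {z : A}
    (hz : z ∈ PCeig F a 1) : z = B a z • a := by
  rw [ha.2.2] at hz
  obtain ⟨c, rfl⟩ := mem_span_singleton.mp hz
  simp [hBaa]

theorem IsPrimPCAxis.exists_decomposition (ha : IsPrimPCAxis F η a)
    (hBfrob : ∀ x y z : A, B (x * y) z = B x (y * z)) (hBaa : B a a = 1) (hη1 : η ≠ 1) (x : A) :
    ∃ u ∈ PCeig F a η, ∃ p ∈ PCeig F a (1 / 2 : F), x = B a x • a + u + p := by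
  have haa := ha.1.self_mem_PCeig_one
  have hx : x ∈ PCeig F a 1 ⊔ PCeig F a η ⊔ PCeig F a (1 / 2 : F) := by
    rw [ha.1.decomp]; trivial
  obtain ⟨z, hz, p, hp, rfl⟩ := mem_sup.mp hx
  obtain ⟨x₁, hx₁, u, hu, rfl⟩ := mem_sup.mp hz
  refine ⟨u, hu, p, hp, ?_⟩
  have hBau : B a u = 0 := frobenius_apply_eq_zero_of_eigen hBfrob (Ne.symm hη1) haa hu
  have hBap : B a p = 0 := frobenius_apply_eq_zero_of_eigen hBfrob one_ne_one_div_two haa hp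
  rw [map_add, map_add, hBau, hBap, add_zero, add_zero, ← ha.eq_smul_of_mem_one hBaa hx₁]

theorem IsPCAxis.frobenius_apply_decomposition (ha : IsPCAxis F η a)
    (hBfrob : ∀ x y z : A, B (x * y) z = B x (y * z)) (hBaa : B a a = 1) (hη1 : η ≠ 1)
    (hηh : η ≠ 1 / 2) (α γ : F) {u v p q : A} (hu : u ∈ PCeig F a η) (hv : v ∈ PCeig F a η)
    (hp : p ∈ PCeig F a (1 / 2 : F)) (hq : q ∈ PCeig F a (1 / 2 : F)) :
    B (α • a + u + p) (γ • a + v + q) = α * γ + B u v + B p q := by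
  have haa := ha.self_mem_PCeig_one
  have h1η := Ne.symm hη1
  have h1h := one_ne_one_div_two (F := F)
  have orth {l m : F} (hlm : l ≠ m) {x y : A} (hx : a * x = l • x) (hy : a * y = m • y) :=
    frobenius_apply_eq_zero_of_eigen hBfrob hlm hx hy
  simp only [map_add, map_smul, LinearMap.add_apply, LinearMap.smul_apply, smul_eq_mul, hBaa,
    orth h1η haa hv, orth h1h haa hq, orth h1η.symm hu haa, orth hηh hu hq,
    orth h1h.symm hp haa, orth hηh.symm hp hv]
  ring

theorem IsPrimPCAxis.mul_eq_of_mem_eta (ha : IsPrimPCAxis F η a)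
    (hBfrob : ∀ x y z : A, B (x * y) z = B x (y * z)) (hBaa : B a a = 1) {u v : A}
    (hu : u ∈ PCeig F a η) (hv : v ∈ PCeig F a η) : u * v = (η * B u v) • a := by
  rw [ha.eq_smul_of_mem_one hBaa (ha.1.fusee u hu v hv), frobenius_apply_mul_of_eigen hBfrob hu]

theorem IsPrimPCAxis.exists_mul_eq_of_mem_half (ha : IsPrimPCAxis F η a)
    (hBfrob : ∀ x y z : A, B (x * y) z = B x (y * z)) (hBaa : B a a = 1) (hη1 : η ≠ 1)
    {p q : A} (hp : p ∈ PCeig F a (1 / 2 : F)) (hq : q ∈ PCeig F a (1 / 2 : F)) :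
    ∃ w ∈ PCeig F a η, p * q = ((1 / 2 : F) * B p q) • a + w := by
  obtain ⟨z, hz, w, hw, hpq⟩ := mem_sup.mp (ha.1.fushh p hp q hq)
  refine ⟨w, hw, ?_⟩
  have hBaw : B a w = 0 := frobenius_apply_eq_zero_of_eigen hBfrob (Ne.symm hη1)
    ha.1.self_mem_PCeig_one hw
  have hBaz : B a z = (1 / 2 : F) * B p q := by
    rw [← frobenius_apply_mul_of_eigen hBfrob hp, ← hpq, map_add, hBaw, add_zero]
  rw [← hpq, ← hBaz, ← ha.eq_smul_of_mem_one hBaa hz]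

end PrimitiveAxis

theorem IsPCAxis.mul_add_mul_add_mul_of_decomposition {η : F} {a : A} (ha : IsPCAxis F η a)
    (h2 : (2 : F) ≠ 0) (α γ s t : F) {u v p q w : A} (hu : u ∈ PCeig F a η)
    (hv : v ∈ PCeig F a η) (hp : p ∈ PCeig F a (1 / 2 : F)) (hq : q ∈ PCeig F a (1 / 2 : F))
    (hw : w ∈ PCeig F a η) (huv : u * v = (η * s) • a)
    (hpq : p * q = ((1 / 2 : F) * t) • a + w) :
    let x := α • a + u + p
    let y := γ • a + v + q
    a * (x * y) + x * (a * y) + y * (a * x) =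
      ((1 + η) * (η * s + 1 / 2 * t) - η * (α * γ + s + t)) • a - (γ * η) • x - (α * η) • y +
        (1 + η) • (x * y + γ • (a * x) + α • (a * y)) := by
  have hu' : a * u = η • u := hu
  have hv' : a * v = η • v := hv
  have hp' : a * p = (1 / 2 : F) • p := hp
  have hq' : a * q = (1 / 2 : F) • q := hq
  have hw' : a * w = η • w := hw
  have huq : a * (u * q) = (1 / 2 : F) • (u * q) := ha.fuseh u hu q hq
  have hpv : a * (p * v) = (1 / 2 : F) • (p * v) := by rw [mul_comm p v]; exact ha.fuseh v hv p hp
  intro x y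
  simp only [x, y, mul_add, add_mul, smul_add, smul_mul_assoc, mul_smul_comm, smul_smul,
    ha.idem, hu', hv', hp', hq', hw', mul_comm u a, mul_comm v a, mul_comm p a, mul_comm q a,
    mul_comm v u, huv, mul_comm q p, hpq, mul_comm q u, mul_comm v p, huq, hpv]
  match_scalars <;> field_simp <;> ring

theorem stmt14_general (η : F) (h2 : (2 : F) ≠ 0) (hη1 : η ≠ 1) (hηh : η ≠ 1 / 2)
    (B : A →ₗ[F] A →ₗ[F] F)
    (hBfrob : ∀ x y z : A, B (x * y) z = B x (y * z))
    (hBnorm : ∀ a : A, IsPrimPCAxis F η a → B a a = 1)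
    (a : A) (ha : IsPrimPCAxis F η a)
    (x y : A) (α β γ ψ : F)
    (hα : α = B a x) (hβ : β = B x y) (hγ : γ = B a y) (hψ : ψ = B a (x * y)) :
    a * (x * y) + x * (a * y) + y * (a * x) =
      ((1 + η) * (ψ - α * γ) - η * β) • a - (γ * η) • x - (α * η) • y +
        (1 + η) • (x * y + γ • (a * x) + α • (a * y)) := by
  have hBaa := hBnorm a ha
  obtain ⟨u, hu, p, hp, hx⟩ := ha.exists_decomposition hBfrob hBaa hη1 x
  obtain ⟨v, hv, q, hq, hy⟩ := ha.exists_decomposition hBfrob hBaa hη1 y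
  obtain ⟨w, hw, hpq⟩ := ha.exists_mul_eq_of_mem_half hBfrob hBaa hη1 hp hq
  rw [← hα] at hx
  rw [← hγ] at hy
  have hB := ha.1.frobenius_apply_decomposition hBfrob hBaa hη1 hηh
  have hax : a * x = α • a + η • u + (1 / 2 : F) • p := by
    rw [hx, mul_add, mul_add, mul_smul_comm, ha.1.idem, hu, hp]
  have hψ' : ψ - α * γ = η * B u v + 1 / 2 * B p q := by
    rw [hψ, ← hBfrob, hax, hy, hB α γ (smul_mem _ η hu) hv (smul_mem _ _ hp) hq]
    simp only [map_smul, LinearMap.smul_apply, smul_eq_mul]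
    ring
  rw [hψ', hβ, hx, hy, hB α γ hu hv hp hq]
  exact ha.1.mul_add_mul_add_mul_of_decomposition h2 α γ (B u v) (B p q) hu hv hp hq hw
    (ha.mul_eq_of_mem_eta hBfrob hBaa hu hv) hpq

/-- for a primitive axis `a` and any `x`, `y`, with `α = (a,x)`, `β = (x,y)`,
`γ = (a,y)`, `ψ = (a,xy)`:
`a(xy) + x(ay) + y(ax) = ((1+η)(ψ-αγ) - ηβ) a - γη x - αη y + (1+η)(xy + γ ax + α ay)`. -/
theorem stmt14 (η : F) (h2 : (2 : F) ≠ 0) (hη1 : η ≠ 1) (hηh : η ≠ 1 / 2)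
    (hA : IsPrimPCAxialAlgebra F A η)
    (B : A →ₗ[F] A →ₗ[F] F) (hB0 : B ≠ 0)
    (hBsymm : ∀ x y : A, B x y = B y x)
    (hBfrob : ∀ x y z : A, B (x * y) z = B x (y * z))
    (hBnorm : ∀ a : A, IsPrimPCAxis F η a → B a a = 1)
    (a : A) (ha : IsPrimPCAxis F η a)
    (x y : A) (α β γ ψ : F)
    (hα : α = B a x) (hβ : β = B x y) (hγ : γ = B a y) (hψ : ψ = B a (x * y)) :
    a * (x * y) + x * (a * y) + y * (a * x) =
      ((1 + η) * (ψ - α * γ) - η * β) • a - (γ * η) • x - (α * η) • y +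
        (1 + η) • (x * y + γ • (a * x) + α • (a * y)) :=
  stmt14_general η h2 hη1 hηh B hBfrob hBnorm a ha x y α β γ ψ hα hβ hγ hψ
end

section
/- Let η ≠ -1 and let A be a primitive PC(η)-axial algebra with weight homomorphism w : A → F (the algebra homomorphism given by w(x) = (a,x) for any primitive axis a, where (·,·) is the Frobenius form with (a,a) = 1 on primitive axes). Then for all x, y, z ∈ A: x(yz) + y(xz) + z(xy) = (η+1)·(w(x)·yz + w(y)·xz + w(z)·xy) - η·(w(yz)·x + w(xz)·y + w(xy)·z). In particular, if char F ≠ 3, then (x·x)·x = (η+1)·w(x)·(x·x) - η·w(x)²·x for all x ∈ A, i.e. A is a train algebra of rank 3. -/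
open Submodule

variable {F : Type*} [Field F] {A : Type*} [NonUnitalNonAssocCommRing A]
  [Module F A] [SMulCommClass F A A] [IsScalarTower F A A]

/-!
The Frobenius form is determined by the weight: `B p x = w p * w x` for every `p` in the algebra
generated by the axes, since `B b x = w x` for a primitive axis `b` and products are handled by
associativity of `B`; hence `w` is multiplicative.

For a primitive axis `c`, write `y = w y • c + e + h` with `e ∈ A_η(c)`, `h ∈ A_{1/2}(c)`.
Multiplicativity of `w` sharpens the fusion law to `A_η A_η = 0` and `A_{1/2} A_{1/2} ⊆ A_η`,
and with this multiplication table the linearized identity is checked directly when `x = c`.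
It is linear in `x`, so it remains to see that the primitive axes span `A`. The Miyamoto
involution `τ_c` (`1` on `A_1 ⊕ A_η`, `-1` on `A_{1/2}`) is an automorphism, so `τ_c d` is a
primitive axis for every primitive axis `d`, and `4 c d = (4 - 4η) c + (2η + 1) d + (2η - 1) τ_c d`;
thus the span of the primitive axes is a subalgebra. Putting `x = y = z` gives the train identity.
-/

set_option linter.unusedSectionVars false

theorem mem_PCeig {c x : A} {lam : F} : x ∈ PCeig F c lam ↔ c * x = lam • x := Iff.rfl

theorem self_mem_PCeig_one {c : A} (hc : c * c = c) : c ∈ PCeig F c 1 := by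
  rw [mem_PCeig, hc, one_smul]

theorem PCeig_eq_eigenspace (c : A) (lam : F) :
    PCeig F c lam = Module.End.eigenspace (LinearMap.mulLeft F c) lam := by
  ext x
  rw [mem_PCeig, Module.End.mem_eigenspace_iff, LinearMap.mulLeft_apply]

theorem one_half_ne_one (h2 : (2 : F) ≠ 0) : (1 / 2 : F) ≠ 1 := by
  intro h
  field_simp at h
  exact one_ne_zero (α := F) (by linear_combination -h)

theorem IsPCAxis.isCompl {η : F} {c : A} (hc : IsPCAxis F η c) (h2 : (2 : F) ≠ 0)
    (hηh : η ≠ 1 / 2) : IsCompl (PCeig F c 1 ⊔ PCeig F c η) (PCeig F c (1 / 2)) := by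
  refine ⟨?_, codisjoint_iff.mpr hc.decomp⟩
  have hind := Module.End.eigenspaces_iSupIndep (LinearMap.mulLeft F c) (1 / 2 : F)
  simp only [← PCeig_eq_eigenspace] at hind
  refine (hind.mono_right (sup_le ?_ ?_)).symm
  · exact le_iSup₂_of_le (1 : F) (one_half_ne_one h2).symm le_rfl
  · exact le_iSup₂_of_le η hηh le_rfl

section GradingInvolution

variable {U W : Submodule F A}

theorem exists_gradingInvolution (hUW : IsCompl U W) (hUU : ∀ u ∈ U, ∀ u' ∈ U, u * u' ∈ U)
    (hUW' : ∀ u ∈ U, ∀ v ∈ W, u * v ∈ W) (hWW : ∀ v ∈ W, ∀ v' ∈ W, v * v' ∈ U) :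
    ∃ τ : A ≃ₗ[F] A, (∀ x y, τ (x * y) = τ x * τ y) ∧ ∀ u ∈ U, ∀ v ∈ W, τ (u + v) = u - v := by
  set τ : A →ₗ[F] A := LinearMap.ofIsCompl hUW U.subtype (-W.subtype)
  have hτ : ∀ u ∈ U, ∀ v ∈ W, τ (u + v) = u - v := by
    intro u hu v hv
    rw [map_add, LinearMap.ofIsCompl_apply_left hUW ⟨u, hu⟩,
      LinearMap.ofIsCompl_apply_right hUW ⟨v, hv⟩, sub_eq_add_neg]
    rfl
  have hdecomp : ∀ x : A, ∃ u ∈ U, ∃ v ∈ W, u + v = x := fun x =>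
    Submodule.mem_sup.mp (hUW.sup_eq_top ▸ mem_top)
  have hinv : Function.Involutive τ := by
    intro x
    obtain ⟨u, hu, v, hv, rfl⟩ := hdecomp x
    rw [hτ u hu v hv, sub_eq_add_neg, hτ u hu (-v) (neg_mem hv), sub_neg_eq_add]
  refine ⟨LinearEquiv.ofInvolutive τ hinv, fun x y => ?_, hτ⟩
  obtain ⟨u, hu, v, hv, rfl⟩ := hdecomp x
  obtain ⟨u', hu', v', hv', rfl⟩ := hdecomp y
  have hexp : (u + v) * (u' + v') = (u * u' + v * v') + (u * v' + u' * v) := by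
    simp only [add_mul, mul_add, mul_comm v u']
    abel
  rw [LinearEquiv.coe_ofInvolutive, hexp,
    hτ _ (add_mem (hUU u hu u' hu') (hWW v hv v' hv')) _
      (add_mem (hUW' u hu v' hv') (hUW' u' hu' v hv)),
    hτ u hu v hv, hτ u' hu' v' hv']
  simp only [sub_mul, mul_sub, mul_comm v u']
  abel

end GradingInvolution

section Axes

variable {η : F}

theorem IsPCAxis.mul_mem_one_sup_eta {c : A} (hc : IsPCAxis F η c) {u u' : A}
    (hu : u ∈ PCeig F c 1 ⊔ PCeig F c η) (hu' : u' ∈ PCeig F c 1 ⊔ PCeig F c η) :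
    u * u' ∈ PCeig F c 1 ⊔ PCeig F c η := by
  obtain ⟨p, hp, e, he, rfl⟩ := mem_sup.mp hu
  obtain ⟨p', hp', e', he', rfl⟩ := mem_sup.mp hu'
  simp only [add_mul, mul_add]
  refine add_mem (add_mem ?_ ?_) (add_mem ?_ ?_)
  · exact mem_sup_left (hc.fus11 p hp p' hp')
  · exact mem_sup_right (mul_comm p' e ▸ hc.fus1e p' hp' e he)
  · exact mem_sup_right (hc.fus1e p hp e' he')
  · exact mem_sup_left (hc.fusee e he e' he')

theorem IsPCAxis.mul_mem_half_of_mem_one_sup_eta {c : A} (hc : IsPCAxis F η c) {u v : A}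
    (hu : u ∈ PCeig F c 1 ⊔ PCeig F c η) (hv : v ∈ PCeig F c (1 / 2)) :
    u * v ∈ PCeig F c (1 / 2) := by
  obtain ⟨p, hp, e, he, rfl⟩ := mem_sup.mp hu
  rw [add_mul]
  exact add_mem (hc.fus1h p hp v hv) (hc.fuseh e he v hv)

theorem IsPCAxis.exists_miyamotoInvolution {c : A} (hc : IsPCAxis F η c) (h2 : (2 : F) ≠ 0)
    (hηh : η ≠ 1 / 2) :
    ∃ τ : A ≃ₗ[F] A, (∀ x y, τ (x * y) = τ x * τ y) ∧
      ∀ u ∈ PCeig F c 1 ⊔ PCeig F c η, ∀ v ∈ PCeig F c (1 / 2), τ (u + v) = u - v :=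
  exists_gradingInvolution (hc.isCompl h2 hηh) (fun _ hu _ hu' => hc.mul_mem_one_sup_eta hu hu')
    (fun _ hu _ hv => hc.mul_mem_half_of_mem_one_sup_eta hu hv) hc.fushh

theorem PCeig_map_equiv (e : A ≃ₗ[F] A) (he : ∀ x y, e (x * y) = e x * e y) (a : A) (lam : F) :
    (PCeig F a lam).map (e : A →ₗ[F] A) = PCeig F (e a) lam := by
  ext x
  rw [mem_map_equiv, mem_PCeig, mem_PCeig, ← e.injective.eq_iff, he, map_smul,
    LinearEquiv.apply_symm_apply]

theorem IsPrimPCAxis.map_equiv {a : A} (ha : IsPrimPCAxis F η a) (e : A ≃ₗ[F] A)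
    (he : ∀ x y, e (x * y) = e x * e y) : IsPrimPCAxis F η (e a) := by
  obtain ⟨hax, ha0, ha1⟩ := ha
  have heig := PCeig_map_equiv e he a
  have transfer : ∀ {l₁ l₂ : F} {P : Submodule F A},
      (∀ x ∈ PCeig F a l₁, ∀ y ∈ PCeig F a l₂, x * y ∈ P) →
        ∀ x ∈ PCeig F (e a) l₁, ∀ y ∈ PCeig F (e a) l₂, x * y ∈ P.map (e : A →ₗ[F] A) := by
    intro l₁ l₂ P hP x hx y hy
    rw [← heig] at hx hy
    obtain ⟨x, hx, rfl⟩ := hx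
    obtain ⟨y, hy, rfl⟩ := hy
    exact ⟨x * y, hP x hx y hy, he x y⟩
  refine ⟨⟨?_, ?_, ?_, ?_, ?_, ?_, ?_, ?_⟩, e.map_ne_zero_iff.mpr ha0, ?_⟩
  · rw [← he, hax.idem]
  · rw [← heig, ← heig, ← heig, ← Submodule.map_sup, ← Submodule.map_sup, hax.decomp,
      Submodule.map_top, LinearEquiv.range]
  · simpa only [← heig] using transfer hax.fus11
  · simpa only [← heig] using transfer hax.fus1e
  · simpa only [← heig] using transfer hax.fus1h
  · simpa only [← heig] using transfer hax.fusee
  · simpa only [← heig] using transfer hax.fuseh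
  · simpa only [← heig, Submodule.map_sup] using transfer hax.fushh
  · rw [← heig, ha1, map_span, Set.image_singleton]
    rfl

end Axes

section FrobeniusForm

variable {η : F} {B : A →ₗ[F] A →ₗ[F] F} {w : A →ₗ[F] F}

theorem weight_mul_primPCAxis_right (hBsymm : ∀ x y : A, B x y = B y x)
    (hBfrob : ∀ x y z : A, B (x * y) z = B x (y * z))
    (hw : ∀ a : A, IsPrimPCAxis F η a → ∀ x : A, w x = B a x) {a : A} (ha : IsPrimPCAxis F η a)
    (x : A) : w (x * a) = w x := by
  rw [hw a ha, hBsymm, hBfrob, ha.1.idem, hBsymm, ← hw a ha]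

theorem weight_mul_of_frobenius_eq (hBsymm : ∀ x y : A, B x y = B y x)
    (hBfrob : ∀ x y z : A, B (x * y) z = B x (y * z))
    (hw : ∀ a : A, IsPrimPCAxis F η a → ∀ x : A, w x = B a x) {a : A} (ha : IsPrimPCAxis F η a)
    {p : A} (hp : ∀ y, B p y = w p * w y) (y : A) : w (p * y) = w p * w y := by
  rw [hw a ha, hBsymm, hBfrob, hp, weight_mul_primPCAxis_right hBsymm hBfrob hw ha]

theorem frobenius_eq_weight_mul_weight (hA : IsPrimPCAxialAlgebra F A η)
    (hBsymm : ∀ x y : A, B x y = B y x) (hBfrob : ∀ x y z : A, B (x * y) z = B x (y * z))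
    (hBnorm : ∀ a : A, IsPrimPCAxis F η a → B a a = 1)
    (hw : ∀ a : A, IsPrimPCAxis F η a → ∀ x : A, w x = B a x) (p x : A) :
    B p x = w p * w x := by
  obtain ⟨X, ⟨a₀, ha₀⟩, hX, hgen⟩ := hA
  have ha₀ := hX a₀ ha₀
  have hp : p ∈ NonUnitalAlgebra.adjoin F X := hgen ▸ NonUnitalAlgebra.mem_top
  induction hp using NonUnitalAlgebra.adjoin_induction generalizing x with
  | mem b hb => rw [hw b (hX b hb) b, hBnorm b (hX b hb), one_mul, ← hw b (hX b hb)]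
  | add p q _ _ hp hq => rw [map_add, LinearMap.add_apply, map_add, add_mul, hp x, hq x]
  | zero => rw [map_zero, LinearMap.zero_apply, map_zero, zero_mul]
  | smul r p _ hp =>
    rw [map_smul, LinearMap.smul_apply, map_smul, smul_eq_mul, smul_eq_mul, hp x, mul_assoc]
  | mul p q _ _ hp hq =>
    rw [hBfrob, hp, weight_mul_of_frobenius_eq hBsymm hBfrob hw ha₀ hq,
      weight_mul_of_frobenius_eq hBsymm hBfrob hw ha₀ hp, mul_assoc]

theorem weight_mul (hA : IsPrimPCAxialAlgebra F A η)
    (hBsymm : ∀ x y : A, B x y = B y x) (hBfrob : ∀ x y z : A, B (x * y) z = B x (y * z))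
    (hBnorm : ∀ a : A, IsPrimPCAxis F η a → B a a = 1)
    (hw : ∀ a : A, IsPrimPCAxis F η a → ∀ x : A, w x = B a x) (x y : A) :
    w (x * y) = w x * w y := by
  obtain ⟨X, ⟨a, ha⟩, hX, -⟩ := id hA
  exact weight_mul_of_frobenius_eq hBsymm hBfrob hw (hX a ha)
    (frobenius_eq_weight_mul_weight hA hBsymm hBfrob hBnorm hw x) y

end FrobeniusForm

section Weight

variable {η : F} (w : A →ₙₐ[F] F)

theorem weight_eq_zero_of_mem_PCeig {c : A} (hwc : w c = 1) {lam : F} (hlam : lam ≠ 1) {x : A}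
    (hx : x ∈ PCeig F c lam) : w x = 0 := by
  have h := congrArg w (mem_PCeig.mp hx)
  rw [map_mul, hwc, one_mul, map_smul, smul_eq_mul] at h
  have h' : (1 - lam) * w x = 0 := by linear_combination h
  exact (mul_eq_zero.mp h').resolve_left (sub_ne_zero.mpr hlam.symm)

theorem IsPrimPCAxis.eq_weight_smul_of_mem_one {c : A} (hc : IsPrimPCAxis F η c) (hwc : w c = 1)
    {p : A} (hp : p ∈ PCeig F c 1) : p = w p • c := by
  rw [hc.2.2] at hp
  obtain ⟨β, rfl⟩ := mem_span_singleton.mp hp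
  rw [map_smul, hwc, smul_eq_mul, mul_one]

theorem IsPrimPCAxis.exists_eq_weight_smul_add_add {c : A} (hc : IsPrimPCAxis F η c)
    (hwc : w c = 1) (h2 : (2 : F) ≠ 0) (hη1 : η ≠ 1) (y : A) :
    ∃ e ∈ PCeig F c η, ∃ h ∈ PCeig F c (1 / 2), y = w y • c + e + h := by
  obtain ⟨u, hu, h, hh, rfl⟩ := mem_sup.mp (hc.1.decomp ▸ mem_top : y ∈ _)
  obtain ⟨p, hp, e, he, rfl⟩ := mem_sup.mp hu
  refine ⟨e, he, h, hh, ?_⟩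
  rw [map_add, map_add, weight_eq_zero_of_mem_PCeig w hwc hη1 he,
    weight_eq_zero_of_mem_PCeig w hwc (one_half_ne_one h2) hh, add_zero, add_zero,
    ← hc.eq_weight_smul_of_mem_one w hwc hp]

theorem IsPrimPCAxis.mul_eq_zero_of_mem_eta {c : A} (hc : IsPrimPCAxis F η c) (hwc : w c = 1)
    (hη1 : η ≠ 1) {e f : A} (he : e ∈ PCeig F c η) (hf : f ∈ PCeig F c η) : e * f = 0 := by
  rw [hc.eq_weight_smul_of_mem_one w hwc (hc.1.fusee e he f hf), map_mul,
    weight_eq_zero_of_mem_PCeig w hwc hη1 he, zero_mul, zero_smul]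

theorem IsPrimPCAxis.mul_mem_eta_of_mem_half {c : A} (hc : IsPrimPCAxis F η c) (hwc : w c = 1)
    (h2 : (2 : F) ≠ 0) (hη1 : η ≠ 1) {h k : A} (hh : h ∈ PCeig F c (1 / 2))
    (hk : k ∈ PCeig F c (1 / 2)) : h * k ∈ PCeig F c η := by
  obtain ⟨p, hp, q, hq, hpq⟩ := mem_sup.mp (hc.1.fushh h hh k hk)
  have hwp : w p = 0 := by
    have hwhk := congrArg w hpq
    rw [map_add, map_mul, weight_eq_zero_of_mem_PCeig w hwc (one_half_ne_one h2) hh, zero_mul,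
      weight_eq_zero_of_mem_PCeig w hwc hη1 hq, add_zero] at hwhk
    exact hwhk
  rw [← hpq, hc.eq_weight_smul_of_mem_one w hwc hp, hwp, zero_smul, zero_add]
  exact hq

end Weight

theorem IsPrimPCAxis.linearized_train_identity {η : F} (w : A →ₙₐ[F] F) {c : A}
    (hc : IsPrimPCAxis F η c) (hwc : w c = 1) (h2 : (2 : F) ≠ 0) (hη1 : η ≠ 1) (y z : A) :
    c * (y * z) + y * (c * z) + z * (c * y) =
      (η + 1) • (w c • (y * z) + w y • (c * z) + w z • (c * y)) -
        η • (w (y * z) • c + w (c * z) • y + w (c * y) • z) := by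
  obtain ⟨e, he, h, hh, hy⟩ := hc.exists_eq_weight_smul_add_add w hwc h2 hη1 y
  obtain ⟨f, hf, k, hk, hz⟩ := hc.exists_eq_weight_smul_add_add w hwc h2 hη1 z
  rw [hy, hz]
  have hcc : c * c = c := hc.1.idem
  have hce : c * e = η • e := he
  have hcf : c * f = η • f := hf
  have hch : c * h = (1 / 2 : F) • h := hh
  have hck : c * k = (1 / 2 : F) • k := hk
  have hef : e * f = 0 := hc.mul_eq_zero_of_mem_eta w hwc hη1 he hf
  have hcek : c * (e * k) = (1 / 2 : F) • (e * k) := hc.1.fuseh e he k hk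
  have hcfh : c * (f * h) = (1 / 2 : F) • (f * h) := hc.1.fuseh f hf h hh
  have hchk : c * (h * k) = η • (h * k) := hc.mul_mem_eta_of_mem_half w hwc h2 hη1 hh hk
  have wη : ∀ {x}, x ∈ PCeig F c η → w x = 0 := weight_eq_zero_of_mem_PCeig w hwc hη1
  have wh : ∀ {x}, x ∈ PCeig F c (1 / 2) → w x = 0 :=
    weight_eq_zero_of_mem_PCeig w hwc (one_half_ne_one h2)
  simp only [mul_add, add_mul, smul_mul_assoc, mul_smul_comm, map_mul, map_add, map_smul,
    smul_eq_mul, hwc, wη he, wη hf, wh hh, wh hk, hcc, hce, hcf, hch, hck, mul_comm _ c,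
    mul_comm f e, mul_comm k e, mul_comm h f, mul_comm k h, hef, hcek, hcfh, hchk, mul_zero,
    mul_one, one_mul, add_zero, smul_smul, smul_add]
  match_scalars <;> field_simp <;> ring

theorem IsPrimPCAxis.mul_mem_span {η : F} (w : A →ₙₐ[F] F)
    (hw1 : ∀ a : A, IsPrimPCAxis F η a → w a = 1) (h2 : (2 : F) ≠ 0) (hη1 : η ≠ 1)
    (hηh : η ≠ 1 / 2) {c d : A} (hc : IsPrimPCAxis F η c) (hd : IsPrimPCAxis F η d) :
    c * d ∈ span F {a : A | IsPrimPCAxis F η a} := by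
  obtain ⟨e, he, h, hh, hde⟩ := hc.exists_eq_weight_smul_add_add w (hw1 c hc) h2 hη1 d
  rw [hw1 d hd, one_smul] at hde
  obtain ⟨τ, hτmul, hτ⟩ := hc.1.exists_miyamotoInvolution h2 hηh
  have hτd : τ d = c + e - h := by
    rw [hde, hτ _ (add_mem (mem_sup_left (self_mem_PCeig_one hc.1.idem)) (mem_sup_right he)) h hh]
  -- both sides equal `c + η • e + (1 / 2) • h`
  have hcd : c * d = (4 : F)⁻¹ • ((4 - 4 * η) • c + (2 * η + 1) • d + (2 * η - 1) • τ d) := by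
    rw [hτd, hde, mul_add, mul_add, hc.1.idem, mem_PCeig.mp he, mem_PCeig.mp hh]
    have h4 : (4 : F) ≠ 0 := by
      convert mul_ne_zero h2 h2 using 1
      norm_num
    match_scalars <;> field_simp <;> ring
  have axis_mem : ∀ {a : A}, IsPrimPCAxis F η a → a ∈ span F {a : A | IsPrimPCAxis F η a} :=
    fun ha => subset_span ha
  rw [hcd]
  exact smul_mem _ _ (add_mem (add_mem (smul_mem _ _ (axis_mem hc)) (smul_mem _ _ (axis_mem hd)))
    (smul_mem _ _ (axis_mem (hd.map_equiv τ hτmul))))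

theorem mul_mem_span_of_forall_mem {S : Set A} (hS : ∀ a ∈ S, ∀ b ∈ S, a * b ∈ span F S)
    {x y : A} (hx : x ∈ span F S) (hy : y ∈ span F S) : x * y ∈ span F S := by
  have hle : map₂ (LinearMap.mul F A) (span F S) (span F S) ≤ span F S := by
    rw [map₂_span_span, span_le]
    rintro _ ⟨a, ha, b, hb, rfl⟩
    exact hS a ha b hb
  exact hle (apply_mem_map₂ _ hx hy)

theorem span_primPCAxes_eq_top {η : F} (hA : IsPrimPCAxialAlgebra F A η) (w : A →ₙₐ[F] F)
    (hw1 : ∀ a : A, IsPrimPCAxis F η a → w a = 1) (h2 : (2 : F) ≠ 0) (hη1 : η ≠ 1)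
    (hηh : η ≠ 1 / 2) : span F {a : A | IsPrimPCAxis F η a} = ⊤ := by
  obtain ⟨X, -, hX, hgen⟩ := hA
  let S := (span F {a : A | IsPrimPCAxis F η a}).toNonUnitalSubalgebra fun _ _ =>
    mul_mem_span_of_forall_mem fun _ ha _ hb => ha.mul_mem_span w hw1 h2 hη1 hηh hb
  have hS : NonUnitalAlgebra.adjoin F X ≤ S := NonUnitalAlgebra.adjoin_le fun a ha =>
    subset_span (hX a ha)
  rw [hgen] at hS
  exact eq_top_iff.mpr fun x _ => hS (NonUnitalAlgebra.mem_top (x := x))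

theorem linearized_train_identity {η : F} (hA : IsPrimPCAxialAlgebra F A η) (w : A →ₙₐ[F] F)
    (hw1 : ∀ a : A, IsPrimPCAxis F η a → w a = 1) (h2 : (2 : F) ≠ 0) (hη1 : η ≠ 1)
    (hηh : η ≠ 1 / 2) (x y z : A) :
    x * (y * z) + y * (x * z) + z * (x * y) =
      (η + 1) • (w x • (y * z) + w y • (x * z) + w z • (x * y)) -
        η • (w (y * z) • x + w (x * z) • y + w (x * y) • z) := by
  have hx : x ∈ span F {a : A | IsPrimPCAxis F η a} := by
    rw [span_primPCAxes_eq_top hA w hw1 h2 hη1 hηh]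
    exact mem_top
  induction hx using span_induction with
  | mem c hc => exact hc.linearized_train_identity w (hw1 c hc) h2 hη1 y z
  | zero => simp only [zero_mul, mul_zero, map_zero, zero_smul, smul_zero, add_zero, sub_zero]
  | add x₁ x₂ _ _ h₁ h₂ =>
    simp only [add_mul, mul_add, map_add]
    linear_combination (norm := module) h₁ + h₂
  | smul r x _ h =>
    simp only [smul_mul_assoc, mul_smul_comm, map_smul, smul_eq_mul]
    linear_combination (norm := module) r • h

theorem train_identity {η : F} (hA : IsPrimPCAxialAlgebra F A η) (w : A →ₙₐ[F] F)
    (hw1 : ∀ a : A, IsPrimPCAxis F η a → w a = 1) (h2 : (2 : F) ≠ 0) (h3 : (3 : F) ≠ 0)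
    (hη1 : η ≠ 1) (hηh : η ≠ 1 / 2) (x : A) :
    (x * x) * x = ((η + 1) * w x) • (x * x) - (η * (w x) ^ 2) • x := by
  have h := linearized_train_identity hA w hw1 h2 hη1 hηh x x x
  rw [map_mul, mul_comm x (x * x)] at h
  refine smul_right_injective A h3 ?_
  linear_combination (norm := module) h

theorem stmt17_general (η : F) (h2 : (2 : F) ≠ 0) (hη1 : η ≠ 1) (hηh : η ≠ 1 / 2)
    (hA : IsPrimPCAxialAlgebra F A η)
    (B : A →ₗ[F] A →ₗ[F] F)
    (hBsymm : ∀ x y : A, B x y = B y x)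
    (hBfrob : ∀ x y z : A, B (x * y) z = B x (y * z))
    (hBnorm : ∀ a : A, IsPrimPCAxis F η a → B a a = 1)
    (w : A →ₗ[F] F)
    (hw : ∀ a : A, IsPrimPCAxis F η a → ∀ x : A, w x = B a x) :
    (∀ x y z : A, x * (y * z) + y * (x * z) + z * (x * y) =
      (η + 1) • (w x • (y * z) + w y • (x * z) + w z • (x * y)) -
        η • (w (y * z) • x + w (x * z) • y + w (x * y) • z)) ∧
    ((3 : F) ≠ 0 → ∀ x : A,
      (x * x) * x = ((η + 1) * w x) • (x * x) - (η * (w x) ^ 2) • x) := by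
  let wₐ : A →ₙₐ[F] F :=
    { w with map_zero' := map_zero w, map_mul' := weight_mul hA hBsymm hBfrob hBnorm hw }
  have hw1 : ∀ a : A, IsPrimPCAxis F η a → wₐ a = 1 := fun a ha => (hw a ha a).trans (hBnorm a ha)
  exact ⟨linearized_train_identity hA wₐ hw1 h2 hη1 hηh,
    fun h3 => train_identity hA wₐ hw1 h2 h3 hη1 hηh⟩

/-- for `η ≠ -1` and the weight homomorphism `w` of a primitive
`PC(η)`-axial algebra:
`x(yz) + y(xz) + z(xy) = (η+1)(w(x) yz + w(y) xz + w(z) xy) - η(w(yz) x + w(xz) y + w(xy) z)`;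
in particular, if `char F ≠ 3`, then `x³ = (η+1) w(x) x² - η w(x)² x`, i.e. `A` is a train
algebra of rank 3. -/
theorem stmt17 (η : F) (h2 : (2 : F) ≠ 0) (hη1 : η ≠ 1) (hηh : η ≠ 1 / 2) (hηm : η ≠ -1)
    (hA : IsPrimPCAxialAlgebra F A η)
    (B : A →ₗ[F] A →ₗ[F] F) (hB0 : B ≠ 0)
    (hBsymm : ∀ x y : A, B x y = B y x)
    (hBfrob : ∀ x y z : A, B (x * y) z = B x (y * z))
    (hBnorm : ∀ a : A, IsPrimPCAxis F η a → B a a = 1)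
    (w : A →ₗ[F] F)
    (hw : ∀ a : A, IsPrimPCAxis F η a → ∀ x : A, w x = B a x) :
    (∀ x y z : A, x * (y * z) + y * (x * z) + z * (x * y) =
      (η + 1) • (w x • (y * z) + w y • (x * z) + w z • (x * y)) -
        η • (w (y * z) • x + w (x * z) • y + w (x * y) • z)) ∧
    ((3 : F) ≠ 0 → ∀ x : A,
      (x * x) * x = ((η + 1) * w x) • (x * x) - (η * (w x) ^ 2) • x) :=
  stmt17_general η h2 hη1 hηh hA B hBsymm hBfrob hBnorm w hw
end
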